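/- Let (T_n) be a sequence of operators on an increasing chain of Hilbert spaces, uniformly bounded in norm, such that each T_{n+1} dilates T_n, and suppose infinitely many of the T_n are isometries and infinitely many of the adjoints T_n* are isometries (i.e., infinitely many T_n are co-isometries). Then the SOT limit T of T_n P_n is a unitary, and T is a power dilation of every T_n. -/

import Mathlib

/-!
For `x ∈ H_m` and `m ≤ n` the compression gives `T_m x = P_m (T_n x)`, so by Pythagoras
`‖T_n x - T_m x‖² = ‖T_n x‖² - ‖T_m x‖²`. The bounded, increasing sequence `‖T_n x‖²` therefore
makes `(T_n x)` Cauchy, and the uniform bound spreads convergence from the dense union of the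
`H_m` to all of `H`. The limit `S` is isometric on `H_m`, since `T_n` is isometric on
`H_n ⊇ H_m` for infinitely many `n`. Compressions pass to adjoints, so the same argument applied
to `T_n*` gives a strong limit, which is `S*` and is isometric because infinitely many `T_n*` are.
Finally `T_n^k → S^k` strongly by the uniform bound, and compressing to `H_m` gives
`P_m S^k = T_m^k` on `H_m`.
-/

open ContinuousLinearMap Filter Topology

section Range

variable {R M : Type*} [Semiring R] [AddCommMonoid M] [Module R M] [TopologicalSpace M]

theorem IsIdempotentElem.apply_of_mem_range {P : M →L[R] M} (hP : IsIdempotentElem P) {x : M}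
    (hx : x ∈ LinearMap.range (P : M →ₗ[R] M)) : P x = x :=
  (LinearMap.IsIdempotentElem.mem_range_iff
    (ContinuousLinearMap.IsIdempotentElem.toLinearMap hP)).1 hx

theorem range_le_range_of_mul_eq {P Q : M →L[R] M} (h : Q * P = P) :
    LinearMap.range (P : M →ₗ[R] M) ≤ LinearMap.range (Q : M →ₗ[R] M) := by
  rw [← h]
  exact LinearMap.range_comp_le_range _ _

end Range

theorem IsStarProjection.norm_sq_apply_add_norm_sq_sub_apply {𝕜 E : Type*} [RCLike 𝕜]
    [NormedAddCommGroup E] [InnerProductSpace 𝕜 E] [CompleteSpace E] {Q : E →L[𝕜] E}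
    (hQ : IsStarProjection Q) (y : E) : ‖Q y‖ ^ 2 + ‖y - Q y‖ ^ 2 = ‖y‖ ^ 2 := by
  have horth : inner 𝕜 (Q y) (y - Q y) = 0 := by
    rw [← adjoint_inner_right, ← star_eq_adjoint, hQ.isSelfAdjoint.star_eq, map_sub,
      ← mul_apply_eq_comp, hQ.isIdempotentElem.eq, sub_self, inner_zero_right]
  have := norm_add_sq_eq_norm_sq_add_norm_sq_of_inner_eq_zero _ _ horth
  rw [add_sub_cancel] at this
  simp only [sq, this]

theorem mul_pow_mul_eq_of_le {R : Type*} [Monoid R] [StarMul R] {P T : ℕ → R}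
    (hP : ∀ n, IsStarProjection (P n)) (hmono : ∀ m n, m ≤ n → P n * P m = P m)
    (hPT : ∀ n, P n * T n = T n) (hdil : ∀ n k, P n * T (n + 1) ^ k * P n = T n ^ k * P n)
    {m n : ℕ} (hmn : m ≤ n) (k : ℕ) : P m * T n ^ k * P m = T m ^ k * P m := by
  induction n, hmn using Nat.le_induction with
  | base =>
    cases k with
    | zero => simp [(hP m).isIdempotentElem.eq]
    | succ k => simp [pow_succ', ← mul_assoc, hPT]
  | succ n hmn ih =>
    have hPnPm := hmono m n hmn
    have hPmPn : P m * P n = P m := by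
      simpa [(hP m).isSelfAdjoint.star_eq, (hP n).isSelfAdjoint.star_eq] using
        congr_arg star hPnPm
    calc P m * T (n + 1) ^ k * P m = P m * P n * T (n + 1) ^ k * (P n * P m) := by
          rw [hPmPn, hPnPm]
      _ = P m * (P n * T (n + 1) ^ k * P n) * P m := by simp only [mul_assoc]
      _ = P m * T n ^ k * (P n * P m) := by rw [hdil]; simp only [mul_assoc]
      _ = T m ^ k * P m := by rw [hPnPm, ih]

theorem cauchySeq_of_norm_sub_sq_eq {E : Type*} [SeminormedAddCommGroup E] {u : ℕ → E} {C : ℝ}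
    (hbdd : ∀ n, ‖u n‖ ≤ C) (hpyth : ∀ m n, m ≤ n → ‖u n - u m‖ ^ 2 = ‖u n‖ ^ 2 - ‖u m‖ ^ 2) :
    CauchySeq u := by
  have hmono : Monotone fun n => ‖u n‖ ^ 2 := fun m n hmn => by
    have := hpyth m n hmn
    nlinarith [sq_nonneg ‖u n - u m‖]
  have hsq : CauchySeq fun n => ‖u n‖ ^ 2 :=
    (tendsto_atTop_ciSup hmono ⟨C ^ 2, by
      rintro _ ⟨n, rfl⟩
      exact pow_le_pow_left₀ (norm_nonneg _) (hbdd n) 2⟩).cauchySeq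
  rw [Metric.cauchySeq_iff'] at hsq ⊢
  intro ε hε
  obtain ⟨N, hN⟩ := hsq (ε ^ 2) (by positivity)
  refine ⟨N, fun n hn => ?_⟩
  have hlt : ‖u n - u N‖ ^ 2 < ε ^ 2 := by
    rw [hpyth N n hn]
    exact (le_abs_self _).trans_lt (hN n hn)
  rw [dist_eq_norm]
  exact lt_of_pow_lt_pow_left₀ 2 hε.le hlt

section Convergence

variable {𝕜 E F ι : Type*} [NontriviallyNormedField 𝕜] [NormedAddCommGroup E] [NormedSpace 𝕜 E]
  [NormedAddCommGroup F] [NormedSpace 𝕜 F]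

theorem cauchySeq_apply_of_dense {A : ℕ → E →L[𝕜] F} {c : ℝ} (hnorm : ∀ n, ‖A n‖ ≤ c)
    {s : Set E} (hs : Dense s) (hcauchy : ∀ x ∈ s, CauchySeq fun n => A n x) (x : E) :
    CauchySeq fun n => A n x := by
  have hc : 0 ≤ c := (norm_nonneg _).trans (hnorm 0)
  rw [Metric.cauchySeq_iff']
  intro ε hε
  obtain ⟨y, hxy, hys⟩ := Metric.dense_iff.1 hs x (ε / (3 * (c + 1))) (by positivity)
  obtain ⟨N, hN⟩ := Metric.cauchySeq_iff'.1 (hcauchy y hys) (ε / 3) (by positivity)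
  have hclose : ∀ n, dist (A n x) (A n y) < ε / 3 := fun n => by
    rw [dist_eq_norm, ← map_sub]
    calc ‖A n (x - y)‖ ≤ c * ‖x - y‖ := (A n).le_of_opNorm_le (hnorm n) _
      _ ≤ (c + 1) * ‖x - y‖ := by gcongr; linarith
      _ < (c + 1) * (ε / (3 * (c + 1))) := by
          gcongr
          rw [← dist_eq_norm, dist_comm]
          exact hxy
      _ = ε / 3 := by field_simp
  refine ⟨N, fun n hn => ?_⟩
  calc dist (A n x) (A N x)
      ≤ dist (A n x) (A n y) + dist (A n y) (A N y) + dist (A N y) (A N x) :=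
        dist_triangle4 _ _ _ _
    _ < ε / 3 + ε / 3 + ε / 3 := by
        gcongr
        · exact hclose n
        · exact hN n hn
        · rw [dist_comm]; exact hclose N
    _ = ε := by ring

theorem tendsto_apply_of_tendsto_apply {l : Filter ι} {A : ι → E →L[𝕜] F} {S : E →L[𝕜] F}
    {c : ℝ} (hA : ∀ x, Tendsto (fun i => A i x) l (𝓝 (S x))) (hnorm : ∀ i, ‖A i‖ ≤ c)
    {y : ι → E} {y₀ : E} (hy : Tendsto y l (𝓝 y₀)) :
    Tendsto (fun i => A i (y i)) l (𝓝 (S y₀)) := by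
  have hsmall : Tendsto (fun i => A i (y i - y₀)) l (𝓝 0) :=
    squeeze_zero_norm (fun i => (A i).le_of_opNorm_le (hnorm i) _) <| by
      simpa using (hy.sub_const y₀).norm.const_mul c
  simpa using hsmall.add (hA y₀)

theorem tendsto_pow_apply_of_tendsto_apply {l : Filter ι} {A : ι → E →L[𝕜] E}
    {S : E →L[𝕜] E} {c : ℝ} (hA : ∀ x, Tendsto (fun i => A i x) l (𝓝 (S x)))
    (hnorm : ∀ i, ‖A i‖ ≤ c) (k : ℕ) (x : E) :
    Tendsto (fun i => (A i ^ k) x) l (𝓝 ((S ^ k) x)) := by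
  induction k with
  | zero => simpa using tendsto_const_nhds
  | succ k ih =>
    simpa only [pow_succ', mul_apply_eq_comp] using tendsto_apply_of_tendsto_apply hA hnorm ih

end Convergence

theorem adjoint_eq_of_tendsto_apply {𝕜 E F ι : Type*} [RCLike 𝕜] [NormedAddCommGroup E]
    [InnerProductSpace 𝕜 E] [CompleteSpace E] [NormedAddCommGroup F] [InnerProductSpace 𝕜 F]
    [CompleteSpace F] {l : Filter ι} [l.NeBot] {A : ι → E →L[𝕜] F} {S : E →L[𝕜] F}
    {S' : F →L[𝕜] E} (hA : ∀ x, Tendsto (fun i => A i x) l (𝓝 (S x)))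
    (hA' : ∀ y, Tendsto (fun i => adjoint (A i) y) l (𝓝 (S' y))) : adjoint S = S' := by
  refine ((eq_adjoint_iff S' S).2 fun y x => ?_).symm
  refine tendsto_nhds_unique ?_ ((tendsto_const_nhds (x := y)).inner (hA x))
  simpa only [adjoint_inner_left] using (hA' y).inner (𝕜 := 𝕜) (tendsto_const_nhds (x := x))

theorem exists_isometry_tendsto_apply_of_compression {𝕜 E : Type*} [RCLike 𝕜]
    [NormedAddCommGroup E] [InnerProductSpace 𝕜 E] [CompleteSpace E] {P B : ℕ → E →L[𝕜] E}
    {c : ℝ} (hP : ∀ n, IsStarProjection (P n)) (hmono : ∀ m n, m ≤ n → P n * P m = P m)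
    (hdense : Dense (⋃ n, (LinearMap.range (P n : E →ₗ[𝕜] E) : Set E)))
    (hnorm : ∀ n, ‖B n‖ ≤ c) (hcomp : ∀ m n, m ≤ n → P m * B n * P m = B m)
    (hiso : ∃ᶠ n in atTop, ∀ x ∈ LinearMap.range (P n : E →ₗ[𝕜] E), ‖B n x‖ = ‖x‖) :
    ∃ S : E →L[𝕜] E, (∀ x, Tendsto (fun n => B n x) atTop (𝓝 (S x))) ∧ ∀ x, ‖S x‖ = ‖x‖ := by
  have hrange : ∀ m n, m ≤ n → ∀ x ∈ LinearMap.range (P m : E →ₗ[𝕜] E),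
      x ∈ LinearMap.range (P n : E →ₗ[𝕜] E) :=
    fun m n hmn => range_le_range_of_mul_eq (hmono m n hmn)
  have hpyth : ∀ m n, m ≤ n → ∀ x ∈ LinearMap.range (P m : E →ₗ[𝕜] E),
      ‖B n x - B m x‖ ^ 2 = ‖B n x‖ ^ 2 - ‖B m x‖ ^ 2 := fun m n hmn x hx => by
    have hcompress : P m (B n x) = B m x := by
      rw [← hcomp m n hmn, mul_apply_eq_comp, mul_apply_eq_comp,
        (hP m).isIdempotentElem.apply_of_mem_range hx]
    rw [← (hP m).norm_sq_apply_add_norm_sq_sub_apply (B n x), hcompress]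
    ring
  have hcauchy : ∀ x, CauchySeq fun n => B n x := by
    refine cauchySeq_apply_of_dense hnorm hdense fun x hx => ?_
    obtain ⟨m, hx⟩ := Set.mem_iUnion.1 hx
    refine (cauchySeq_shift m).1 (cauchySeq_of_norm_sub_sq_eq (C := c * ‖x‖)
      (fun n => (B _).le_of_opNorm_le (hnorm _) x) fun i j hij => ?_)
    exact hpyth _ _ (by omega) x (hrange m _ (by omega) x hx)
  have hlim := fun x => (hcauchy x).tendsto_limUnder
  let S := continuousLinearMapOfTendsto B (tendsto_pi_nhds.2 hlim)
  have hS : ∀ x, Tendsto (fun n => B n x) atTop (𝓝 (S x)) := hlim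
  refine ⟨S, hS, congrFun (Continuous.ext_on hdense S.continuous.norm continuous_norm ?_)⟩
  intro x hx
  obtain ⟨m, hx⟩ := Set.mem_iUnion.1 hx
  refine tendsto_nhds_unique_of_frequently_eq (hS x).norm tendsto_const_nhds ?_
  exact (hiso.and_eventually (eventually_ge_atTop m)).mono fun n ⟨hn, hmn⟩ =>
    hn x (hrange m n hmn x hx)

/-- If `(T n)` is a uniformly bounded chain of power dilations on increasing closed
subspaces `H_n = range (P n)`, infinitely many `T n` are isometries and infinitely many
`T n` are co-isometries (their adjoints are isometries on `H_n`), then the SOT limit `S`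
of `T n ∘ P n` exists, is a unitary (an isometry with isometric adjoint), and is a power
dilation of every `T n`. -/
theorem stmt9 {H : Type*} [NormedAddCommGroup H] [InnerProductSpace ℂ H] [CompleteSpace H]
    (P T : ℕ → H →L[ℂ] H) (c : ℝ)
    (hPproj : ∀ n, IsIdempotentElem (P n)) (hPsa : ∀ n, IsSelfAdjoint (P n))
    (hPmono : ∀ m n, m ≤ n → P n ∘L P m = P m)
    (hdense : (⨆ n, LinearMap.range (P n : H →ₗ[ℂ] H)).topologicalClosure = ⊤)
    (hsupp : ∀ n, P n ∘L T n = T n ∧ T n ∘L P n = T n)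
    (hnorm : ∀ n, ‖T n‖ ≤ c)
    (hdil : ∀ n k, ∀ h ∈ LinearMap.range (P n : H →ₗ[ℂ] H),
      P n ((T (n + 1) ^ k) h) = ((T n ^ k) h))
    (hiso : ∃ᶠ n in atTop, ∀ x ∈ LinearMap.range (P n : H →ₗ[ℂ] H), ‖T n x‖ = ‖x‖)
    (hcoiso : ∃ᶠ n in atTop, ∀ x ∈ LinearMap.range (P n : H →ₗ[ℂ] H), ‖adjoint (T n) x‖ = ‖x‖) :
    ∃ S : H →L[ℂ] H,
      (∀ x : H, Tendsto (fun n => T n (P n x)) atTop (𝓝 (S x))) ∧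
      (∀ x : H, ‖S x‖ = ‖x‖) ∧ (∀ x : H, ‖adjoint S x‖ = ‖x‖) ∧
      (∀ n k, ∀ h ∈ LinearMap.range (P n : H →ₗ[ℂ] H), P n ((S ^ k) h) = ((T n ^ k) h)) := by
  have hP n : IsStarProjection (P n) := ⟨hPproj n, hPsa n⟩
  have hTP n : T n * P n = T n := (hsupp n).2
  have hdilT : ∀ m n, m ≤ n → ∀ k, P m * T n ^ k * P m = T m ^ k * P m :=
    fun m n hmn => mul_pow_mul_eq_of_le hP hPmono (fun n => (hsupp n).1)
      (fun n k => by ext h; exact hdil n k (P n h) (LinearMap.mem_range_self _ h)) hmn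
  have hcompT : ∀ m n, m ≤ n → P m * T n * P m = T m := fun m n hmn => by
    simpa [hTP] using hdilT m n hmn 1
  have hcompA : ∀ m n, m ≤ n → P m * adjoint (T n) * P m = adjoint (T m) := fun m n hmn => by
    simpa [← star_eq_adjoint, mul_assoc, (hP m).isSelfAdjoint.star_eq] using
      congr_arg star (hcompT m n hmn)
  have hdense' : Dense (⋃ n, (LinearMap.range (P n : H →ₗ[ℂ] H) : Set H)) := by
    rw [← Submodule.coe_iSup_of_directed _ (monotone_nat_of_le_succ fun n =>
      range_le_range_of_mul_eq (hPmono n (n + 1) n.le_succ)).directed_le]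
    exact Submodule.dense_iff_topologicalClosure_eq_top.2 hdense
  obtain ⟨S, hS, hSiso⟩ :=
    exists_isometry_tendsto_apply_of_compression hP hPmono hdense' hnorm hcompT hiso
  obtain ⟨S', hS', hS'iso⟩ := exists_isometry_tendsto_apply_of_compression hP hPmono hdense'
    (fun n => (LinearIsometryEquiv.norm_map _ _).trans_le (hnorm n)) hcompA hcoiso
  obtain rfl : adjoint S = S' := adjoint_eq_of_tendsto_apply hS hS'
  refine ⟨S, fun x => by simpa only [← mul_apply_eq_comp, hTP] using hS x, hSiso, hS'iso, ?_⟩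
  intro n k h hh
  refine tendsto_nhds_unique_of_eventuallyEq
    (((P n).continuous.tendsto _).comp (tendsto_pow_apply_of_tendsto_apply hS hnorm k h))
    tendsto_const_nhds ?_
  filter_upwards [eventually_ge_atTop n] with j hj
  simpa only [Function.comp_apply, mul_apply_eq_comp,
    (hP n).isIdempotentElem.apply_of_mem_range hh] using congr($(hdilT n j hj k) h)
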